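/- Let n ≥ 2 be an integer, let f : [0,∞) → [0,∞) be a function, and fix a pair of indices 1 ≤ i ≠ j ≤ n. Then f(A) is doubly nonnegative for every n×n doubly nonnegative matrix A if and only if the (i,j) entry of f(A) is nonnegative for every n×n doubly nonnegative matrix A. -/

import Mathlib

open Matrix Filter Set Topology

/-- Functional calculus for real symmetric matrices: apply `f` to the eigenvalues
in a spectral decomposition `A = U D Uᵀ`. -/
noncomputable def matFun {n : ℕ} (f : ℝ → ℝ) (A : Matrix (Fin n) (Fin n) ℝ) :
    Matrix (Fin n) (Fin n) ℝ :=
  if hA : A.IsHermitian then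
    (hA.eigenvectorUnitary : Matrix (Fin n) (Fin n) ℝ) *
      Matrix.diagonal (fun i => f (hA.eigenvalues i)) *
      (hA.eigenvectorUnitary : Matrix (Fin n) (Fin n) ℝ)ᴴ
  else 0

/-- A real matrix is doubly nonnegative if it is (symmetric) positive semidefinite
with all entries nonnegative. -/
def DN {n : ℕ} (A : Matrix (Fin n) (Fin n) ℝ) : Prop :=
  A.PosSemidef ∧ ∀ i j, 0 ≤ A i j

/-!
Positive semidefiniteness of `f(A)` is automatic from `f ≥ 0` on the eigenvalues, and so are its
diagonal entries. Off the diagonal, the functional calculus commutes with simultaneous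
permutation of rows and columns, which preserves `DN`; since the symmetric group acts
transitively on ordered pairs of distinct indices, nonnegativity of one off-diagonal entry
of `f(A)` for all `A ∈ DN_n` gives it for all of them.
-/

namespace Matrix

variable {m n : Type*} [Fintype m] [Fintype n] [DecidableEq m] [DecidableEq n]

def reindexStarAlgEquiv (R α : Type*) [CommSemiring R] [Semiring α] [StarRing α] [Algebra R α]
    (e : m ≃ n) : Matrix m m α ≃⋆ₐ[R] Matrix n n α :=
  { reindexAlgEquiv R α e with
    map_smul' := map_smul (reindexAlgEquiv R α e)
    map_star' := fun M => (conjTranspose_submatrix M e.symm e.symm).symm }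

lemma cfc_reindex (f : ℝ → ℝ) (e : m ≃ n) {A : Matrix m m ℝ} (hA : A.IsHermitian) :
    cfc f (reindex e e A) = reindex e e (cfc f A) :=
  (StarAlgHomClass.map_cfc (S := ℝ) (reindexStarAlgEquiv ℝ ℝ e) f A
    (finite_real_spectrum.continuousOn f) (continuous_id.matrix_submatrix _ _) hA
    (hA.submatrix e.symm)).symm

end Matrix

lemma matFun_eq_cfc {n : ℕ} (f : ℝ → ℝ) {A : Matrix (Fin n) (Fin n) ℝ}
    (hA : A.IsHermitian) : matFun f A = cfc f A := by
  rw [matFun, dif_pos hA, hA.cfc_eq f, Matrix.IsHermitian.cfc]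
  rfl

lemma matFun_submatrix {n : ℕ} (f : ℝ → ℝ) {A : Matrix (Fin n) (Fin n) ℝ}
    (hA : A.IsHermitian) (σ : Equiv.Perm (Fin n)) :
    matFun f (A.submatrix σ σ) = (matFun f A).submatrix σ σ := by
  rw [matFun_eq_cfc f hA, matFun_eq_cfc f (hA.submatrix σ)]
  exact cfc_reindex f σ.symm hA

lemma posSemidef_matFun {n : ℕ} {f : ℝ → ℝ} (hf : ∀ x, 0 ≤ x → 0 ≤ f x)
    {A : Matrix (Fin n) (Fin n) ℝ} (hA : A.PosSemidef) : (matFun f A).PosSemidef := by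
  rw [matFun, dif_pos hA.isHermitian]
  exact (PosSemidef.diagonal fun i => hf _ (hA.eigenvalues_nonneg i)).mul_mul_conjTranspose_same _

lemma DN.submatrix {n : ℕ} {A : Matrix (Fin n) (Fin n) ℝ} (hA : DN A) (σ : Equiv.Perm (Fin n)) :
    DN (A.submatrix σ σ) :=
  ⟨hA.1.submatrix σ, fun _ _ => hA.2 _ _⟩

theorem stmt_8_general (n : ℕ) (f : ℝ → ℝ)
    (hf0 : ∀ x : ℝ, 0 ≤ x → 0 ≤ f x)
    (i j : Fin n) (hij : i ≠ j) :
    (∀ A : Matrix (Fin n) (Fin n) ℝ, DN A → DN (matFun f A)) ↔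
      (∀ A : Matrix (Fin n) (Fin n) ℝ, DN A → 0 ≤ matFun f A i j) := by
  refine ⟨fun h A hA => (h A hA).2 i j, fun h A hA => ⟨posSemidef_matFun hf0 hA.1, fun k l => ?_⟩⟩
  rcases eq_or_ne k l with rfl | hkl
  · exact (posSemidef_matFun hf0 hA.1).diag_nonneg
  obtain ⟨σ, hσ⟩ := Equiv.Perm.exists_extending_pair ![i, j] ![k, l]
    (injective_pair_iff_ne.2 hij) (injective_pair_iff_ne.2 hkl)
  obtain ⟨hσi, hσj⟩ : σ i = k ∧ σ j = l := ⟨hσ 0, hσ 1⟩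
  have := h _ (hA.submatrix σ)
  rwa [matFun_submatrix f hA.1.isHermitian, submatrix_apply, hσi, hσj] at this

theorem stmt_8 (n : ℕ) (hn : 2 ≤ n) (f : ℝ → ℝ)
    (hf0 : ∀ x : ℝ, 0 ≤ x → 0 ≤ f x)
    (i j : Fin n) (hij : i ≠ j) :
    (∀ A : Matrix (Fin n) (Fin n) ℝ, DN A → DN (matFun f A)) ↔
      (∀ A : Matrix (Fin n) (Fin n) ℝ, DN A → 0 ≤ matFun f A i j) :=
  stmt_8_general n f hf0 i j hij
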